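/- arXiv:1609.05794 — 4 statements merged into one kernel-verified Lean document; each statement's English description precedes it below -/
import Mathlib

section
/- Let A be a Hopf algebra over a commutative ring k with comultiplication Δ (an algebra homomorphism A → A⊗A), counit ε and antipode S. Let u be a unit of A and F a unit of A⊗A such that: (i) S(S(a)) = u·a·u⁻¹ for all a ∈ A; (ii) Δ(u) = F⁻¹·(u⊗u) = (u⊗u)·F⁻¹; (iii) ε(u) = 1. Then the following are equivalent: (1) there exists a central unit v of A such that v·v = u·S(u), S(v) = v, ε(v) = 1 and Δ(v) = F⁻¹·(v⊗v); (2) there exists a unit g of A such that Δ(g) = g⊗g, g·g = S(u⁻¹)·u and S(S(a)) = g·a·g⁻¹ for all a ∈ A. -/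
open TensorProduct Coalgebra Bialgebra HopfAlgebra

/-!
Put `g = u v⁻¹`, i.e. `v = g⁻¹ u`. Since `S²` is conjugation by `u`, it is conjugation by `g`
exactly when `v` is central. Applying `S` to `S²(u) = u` shows that `u` commutes with `s = S(u)`;
then, for central `v`, both `v² = u s` and `g² = s⁻¹ u` are equivalent to `s g = v`, which is also
`S(v) = v` because `S(g⁻¹) = g` for group-like `g`. Finally `Δ` and `a ↦ a ⊗ a` are both
multiplicative, so `Δ(u) = (u ⊗ u) F⁻¹` turns `Δ(v) = (v ⊗ v) F⁻¹` into `Δ(g) = g ⊗ g`, and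
`F⁻¹` may stand on either side of the central element `v ⊗ v`.
-/

section Group

variable {G : Type*} [Group G] {u v g s : G}

theorem mul_eq_iff_mul_self_eq_mul_of_commute (hgv : g * v = u) (hus : Commute u s) :
    s * g = v ↔ v * v = u * s := by
  rw [hus.eq, ← hgv, ← mul_assoc, mul_left_inj, eq_comm]

theorem mul_eq_iff_mul_self_eq_inv_mul (hgv : g * v = u) (hgv_comm : Commute g v) :
    s * g = v ↔ g * g = s⁻¹ * u := by
  rw [← hgv, hgv_comm.eq, eq_inv_mul_iff_mul_eq, ← mul_assoc, mul_left_inj]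

end Group

section Monoid

variable {M N : Type*} [Monoid M] [Monoid N]

theorem Units.forall_commute_iff_conj_eq {u v g : Mˣ} (hgv : g * v = u) :
    (∀ x : M, Commute (v : M) x) ↔ ∀ x : M, (u : M) * x * ↑u⁻¹ = g * x * ↑g⁻¹ := by
  subst hgv
  refine forall_congr' fun x => ?_
  rw [mul_inv_rev, Units.val_mul, Units.val_mul]
  simp only [mul_assoc, Units.mul_right_inj]
  rw [← mul_assoc x, ← mul_assoc (v : M), Units.mul_left_inj, ← mul_assoc,
    Units.mul_inv_eq_iff_eq_mul]
  rfl

theorem MonoidHom.map_eq_map_mul_iff_map_eq (φ ψ : M →* N) {u v g : Mˣ} {f : Nˣ}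
    (hgv : g * v = u) (hu : φ u = ψ u * f) :
    φ v = ψ v * f ↔ φ g = ψ g := by
  have hψv : IsUnit (ψ v * f) := (Units.map ψ v * f).isUnit
  have hψg : IsUnit (ψ g) := (Units.map ψ g).isUnit
  rw [← hgv, Units.val_mul, map_mul, map_mul, mul_assoc] at hu
  constructor
  · intro hv
    rwa [hv, hψv.mul_left_inj] at hu
  · intro hg
    rwa [hg, hψg.mul_right_inj] at hu

end Monoid

section TensorSelf

variable {k A : Type*} [CommSemiring k] [Semiring A] [Algebra k A]

def TensorProduct.tmulSelfHom : A →* A ⊗[k] A where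
  toFun a := a ⊗ₜ a
  map_one' := rfl
  map_mul' _ _ := (Algebra.TensorProduct.tmul_mul_tmul _ _ _ _).symm

theorem TensorProduct.commute_tmul_self {c : A} (hc : ∀ x : A, Commute c x) (z : A ⊗[k] A) :
    Commute (c ⊗ₜ[k] c) z := by
  induction z using TensorProduct.induction_on with
  | zero => exact Commute.zero_right _
  | tmul x y => simp only [Commute, SemiconjBy, Algebra.TensorProduct.tmul_mul_tmul, (hc _).eq]
  | add x y hx hy => exact hx.add_right hy

end TensorSelf

theorem Units.isGroupLikeElem_of_comul_eq_tmul {k A : Type*} [CommSemiring k] [Semiring A]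
    [Bialgebra k A] {g : Aˣ} (hg : comul (R := k) (g : A) = (g : A) ⊗ₜ[k] (g : A)) :
    IsGroupLikeElem k (g : A) := by
  have h := congrArg (TensorProduct.lid k A) (rTensor_counit_comul (R := k) (g : A))
  rw [hg, LinearMap.rTensor_tmul, TensorProduct.lid_tmul, TensorProduct.lid_tmul, one_smul] at h
  have h_one : counit (R := k) (g : A) • (1 : A) = 1 := by
    rw [← g.mul_inv, ← smul_mul_assoc, h]
  refine ⟨?_, hg⟩
  simpa using congrArg (counit (R := k)) h_one

section HopfAlgebra

variable {k A : Type*} [CommSemiring k] [Semiring A] [HopfAlgebra k A]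

theorem IsGroupLikeElem.antipode_unitsInv {g : Aˣ} (hg : IsGroupLikeElem k (g : A)) :
    antipode k (↑g⁻¹ : A) = g :=
  (Units.inv_mul_eq_one.mp hg.unitsInv.mul_antipode_cancel).symm

variable (k) in
def HopfAlgebra.antipodeUnits (u : Aˣ) : Aˣ where
  val := antipode k (u : A)
  inv := antipode k (↑u⁻¹ : A)
  val_inv := by rw [← antipode_mul_antidistrib, u.inv_mul, antipode_one]
  inv_val := by rw [← antipode_mul_antidistrib, u.mul_inv, antipode_one]

theorem HopfAlgebra.commute_antipodeUnits {u : Aˣ}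
    (hu : ∀ a : A, antipode k (antipode k a) = u * a * ↑u⁻¹) :
    Commute u (antipodeUnits k u) := by
  have hSSu : antipode k (antipode k (u : A)) = u := by rw [hu, u.mul_inv_cancel_right]
  have h := hu (antipode k (u : A))
  rw [hSSu, Units.eq_mul_inv_iff_mul_eq] at h
  exact Units.ext h.symm

end HopfAlgebra

/-- Characterization of ribbon elements in a Hopf algebra: given a unit `u`
implementing `S²` by conjugation, with `Δ(u) = F⁻¹(u⊗u) = (u⊗u)F⁻¹` and
`ε(u) = 1`, there is a ribbon element `v` iff there is a group-like unit `g`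
with `g² = S(u⁻¹)·u` implementing `S²` by conjugation. -/
theorem ribbon_iff_grouplike {k A : Type*} [CommRing k] [Ring A] [HopfAlgebra k A]
    (u : Aˣ) (F : (A ⊗[k] A)ˣ)
    (hu : ∀ a : A, antipode (R := k) (antipode (R := k) a) = (u : A) * a * (↑u⁻¹ : A))
    (hΔu : comul (R := k) (u : A) = (↑F⁻¹ : A ⊗[k] A) * ((u : A) ⊗ₜ[k] (u : A)) ∧
      comul (R := k) (u : A) = ((u : A) ⊗ₜ[k] (u : A)) * (↑F⁻¹ : A ⊗[k] A))
    (hεu : counit (R := k) (u : A) = 1) :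
    (∃ v : Aˣ,
      (∀ x : A, (v : A) * x = x * (v : A)) ∧
      (v : A) * (v : A) = (u : A) * antipode (R := k) (u : A) ∧
      antipode (R := k) (v : A) = (v : A) ∧
      counit (R := k) (v : A) = 1 ∧
      comul (R := k) (v : A) = (↑F⁻¹ : A ⊗[k] A) * ((v : A) ⊗ₜ[k] (v : A))) ↔
    (∃ g : Aˣ,
      comul (R := k) (g : A) = (g : A) ⊗ₜ[k] (g : A) ∧
      (g : A) * (g : A) = antipode (R := k) (↑u⁻¹ : A) * (u : A) ∧
      ∀ a : A, antipode (R := k) (antipode (R := k) a) = (g : A) * a * (↑g⁻¹ : A)) := by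
  have hus := commute_antipodeUnits hu
  have hΔ {g v : Aˣ} (hgv : g * v = u) := MonoidHom.map_eq_map_mul_iff_map_eq
    (comulAlgHom k A : A →* A ⊗[k] A) TensorProduct.tmulSelfHom hgv hΔu.2
  constructor
  · rintro ⟨v, hv_central, hv_sq, -, -, hv_comul⟩
    have hgv : u * v⁻¹ * v = u := inv_mul_cancel_right u v
    have hsg := (mul_eq_iff_mul_self_eq_mul_of_commute hgv hus).mpr (Units.ext hv_sq)
    refine ⟨u * v⁻¹, (hΔ hgv).mp ?_, ?_, fun a =>
      (hu a).trans ((Units.forall_commute_iff_conj_eq hgv).mp hv_central a)⟩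
    · exact hv_comul.trans (TensorProduct.commute_tmul_self hv_central _).eq.symm
    · exact congrArg Units.val
        ((mul_eq_iff_mul_self_eq_inv_mul hgv (Units.ext (hv_central _).symm)).mp hsg)
  · rintro ⟨g, hg_comul, hg_sq, hg_conj⟩
    have hg := Units.isGroupLikeElem_of_comul_eq_tmul hg_comul
    have hgv : g * (g⁻¹ * u) = u := mul_inv_cancel_left g u
    have hv_central := (Units.forall_commute_iff_conj_eq hgv).mpr fun a =>
      (hu a).symm.trans (hg_conj a)
    have hsg := (mul_eq_iff_mul_self_eq_inv_mul (s := antipodeUnits k u) hgv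
      (Units.ext (hv_central _).symm)).mpr (Units.ext hg_sq)
    refine ⟨g⁻¹ * u, hv_central,
      congrArg Units.val ((mul_eq_iff_mul_self_eq_mul_of_commute hgv hus).mp hsg), ?_, ?_, ?_⟩
    · rw [Units.val_mul, antipode_mul_antidistrib, hg.antipode_unitsInv]
      exact congrArg Units.val hsg
    · rw [Units.val_mul, counit_mul, hg.unitsInv.counit_eq_one, hεu, one_mul]
    · exact ((hΔ hgv).mpr hg_comul).trans (TensorProduct.commute_tmul_self hv_central _).eq
end

section
/- Let A be a Hopf algebra over a commutative ring k with comultiplication Δ (an algebra homomorphism A → A⊗A), counit ε and antipode S. Let u be a unit of A such that S(S(a)) = u·a·u⁻¹ = S(u⁻¹)·a·S(u) for all a ∈ A, and such that u·S(u⁻¹) is group-like, i.e. Δ(u·S(u⁻¹)) = (u·S(u⁻¹)) ⊗ (u·S(u⁻¹)). Assume that the set G = { x : x is a unit of A and Δ(x) = x⊗x } of group-like units of A is finite of odd cardinality N. Then S^{2N}(a) = a for all a ∈ A if and only if there exists a unit g of A with Δ(g) = g⊗g, g·g = S(u⁻¹)·u and S(S(a)) = g·a·g⁻¹ for all a ∈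 A. -/
open TensorProduct Coalgebra Bialgebra HopfAlgebra

/-- If `T∘T` is conjugation by a unit `x`, then `T^[2j]` is conjugation by `x^j`. -/
lemma conj_iterate_aux {A : Type*} [Ring A] (T : A → A) (x : Aˣ)
    (h : ∀ a, T (T a) = (x : A) * a * (↑x⁻¹ : A)) :
    ∀ (j : ℕ) (a : A), T^[2 * j] a = ↑(x ^ j) * a * ↑((x ^ j)⁻¹) := by
  intro j
  induction j with
  | zero => simp
  | succ n ih =>
    intro a
    have h2 : 2 * (n + 1) = 2 * n + 2 := by ring
    have hT2 : T^[2] a = T (T a) := by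
      simp [Function.iterate_succ_apply']
    rw [h2, Function.iterate_add_apply, hT2, h a, ih]
    have hval : (↑(x ^ (n + 1)) : A) = ↑(x ^ n) * ↑x := by
      rw [pow_succ, Units.val_mul]
    have hinv : (↑((x ^ (n + 1))⁻¹) : A) = ↑x⁻¹ * ↑((x ^ n)⁻¹) := by
      rw [pow_succ, mul_inv_rev, Units.val_mul]
    rw [hval, hinv]
    simp [mul_assoc]

/-- A quasitriangular Hopf algebra whose group of group-like units has odd
order `N` admits a group-like unit `g` with `g² = S(u⁻¹)·u` implementing `S²`
by conjugation (i.e. is ribbon) iff `S^(2N) = id`. -/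
theorem ribbon_iff_antipode_iterate {k A : Type*} [CommRing k] [Ring A] [HopfAlgebra k A]
    (u : Aˣ)
    (hu : ∀ a : A, antipode (R := k) (antipode (R := k) a) = (u : A) * a * (↑u⁻¹ : A))
    (hu' : ∀ a : A, antipode (R := k) (antipode (R := k) a) =
      antipode (R := k) (↑u⁻¹ : A) * a * antipode (R := k) (u : A))
    (hgl : comul (R := k) ((u : A) * antipode (R := k) (↑u⁻¹ : A)) =
      ((u : A) * antipode (R := k) (↑u⁻¹ : A)) ⊗ₜ[k]
        ((u : A) * antipode (R := k) (↑u⁻¹ : A)))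
    (G : Set Aˣ) (hG : G = {x : Aˣ | comul (R := k) (x : A) = (x : A) ⊗ₜ[k] (x : A)})
    (N : ℕ) (hfin : G.Finite) (hcard : G.ncard = N) (hodd : Odd N) :
    (∀ a : A, (fun b : A => antipode (R := k) b)^[2 * N] a = a) ↔
    (∃ g : Aˣ,
      comul (R := k) (g : A) = (g : A) ⊗ₜ[k] (g : A) ∧
      (g : A) * (g : A) = antipode (R := k) (↑u⁻¹ : A) * (u : A) ∧
      ∀ a : A, antipode (R := k) (antipode (R := k) a) = (g : A) * a * (↑g⁻¹ : A)) := by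
  set T : A → A := fun b : A => antipode (R := k) b with hT
  set p : A := antipode (R := k) (↑u⁻¹ : A) with hp
  set q : A := antipode (R := k) (u : A) with hq
  -- key identity: conjugation by u equals (p · q)-sandwich
  have hkey : ∀ a : A, (u : A) * a * ↑u⁻¹ = p * a * q := fun a => (hu a).symm.trans (hu' a)
  -- p * q = 1
  have hpq : p * q = 1 := by
    have := hkey 1
    simpa using this.symm
  -- a = (u⁻¹ * p) * a * (q * u) for all a
  have hsand : ∀ a : A, a = (↑u⁻¹ * p) * a * (q * ↑u) := by
    intro a
    calc a = (↑u⁻¹ : A) * ((u : A) * a * ↑u⁻¹) * ↑u := by simp [mul_assoc]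
      _ = (↑u⁻¹ : A) * (p * a * q) * ↑u := by rw [hkey]
      _ = (↑u⁻¹ * p) * a * (q * ↑u) := by simp [mul_assoc]
  have hxy : (↑u⁻¹ * p) * (q * ↑u) = 1 := by
    have : (↑u⁻¹ * p) * (q * ↑u) = ↑u⁻¹ * (p * q) * ↑u := by simp [mul_assoc]
    rw [this, hpq]; simp
  have hyx : (q * ↑u) * (↑u⁻¹ * p) = 1 := by
    have h1 := hsand ((q * ↑u) * (↑u⁻¹ * p))
    calc (q * ↑u) * (↑u⁻¹ * p)
        = (↑u⁻¹ * p) * ((q * ↑u) * (↑u⁻¹ * p)) * (q * ↑u) := h1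
      _ = ((↑u⁻¹ * p) * (q * ↑u)) * ((↑u⁻¹ * p) * (q * ↑u)) := by simp [mul_assoc]
      _ = 1 := by rw [hxy, mul_one]
  have hqp : q * p = 1 := by
    have : q * p = (q * ↑u) * (↑u⁻¹ * p) := by
      rw [mul_assoc, ← mul_assoc (↑u : A)]
      simp
    rw [this, hyx]
  -- S(u) is a unit with inverse S(u⁻¹)
  set Su : Aˣ := ⟨q, p, hqp, hpq⟩ with hSu
  -- u * p = p * u
  have hup : (u : A) * p = p * (u : A) := by
    have h1 := hkey (u : A)
    have h2 : (u : A) = p * (u : A) * q := by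
      rw [← h1]
      simp [mul_assoc]
    calc (u : A) * p = (p * (u : A) * q) * p := by rw [← h2]
      _ = p * (u : A) * (q * p) := by simp [mul_assoc]
      _ = p * (u : A) := by rw [hqp, mul_one]
  set c : Aˣ := u * Su⁻¹ with hc
  have hcval : (c : A) = (u : A) * p := rfl
  have hcinv : (↑c⁻¹ : A) = q * ↑u⁻¹ := by
    rw [hc, mul_inv_rev, inv_inv, Units.val_mul]
  -- group-like units form a subgroup
  have honemem : (1 : Aˣ) ∈ G := by
    rw [hG]
    simp [Set.mem_setOf_eq, Algebra.TensorProduct.one_def]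
  have hmulmem : ∀ x y : Aˣ, x ∈ G → y ∈ G → x * y ∈ G := by
    intro x y hx hy
    rw [hG] at hx hy ⊢
    simp only [Set.mem_setOf_eq] at *
    rw [Units.val_mul, comul_mul, hx, hy, Algebra.TensorProduct.tmul_mul_tmul]
  have hinvmem : ∀ x : Aˣ, x ∈ G → x⁻¹ ∈ G := by
    intro x hx
    rw [hG] at hx ⊢
    simp only [Set.mem_setOf_eq] at *
    have h1 : comul (R := k) ((x : A) * ↑x⁻¹) = 1 := by
      simp
    rw [comul_mul, hx] at h1
    have h2 : ((↑x⁻¹ : A) ⊗ₜ[k] (↑x⁻¹ : A)) * ((x : A) ⊗ₜ[k] (x : A)) = 1 := by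
      rw [Algebra.TensorProduct.tmul_mul_tmul]
      simp [Algebra.TensorProduct.one_def]
    calc comul (R := k) (↑x⁻¹ : A)
        = 1 * comul (R := k) (↑x⁻¹ : A) := (one_mul _).symm
      _ = ((↑x⁻¹ : A) ⊗ₜ[k] (↑x⁻¹ : A)) * (((x : A) ⊗ₜ[k] (x : A)) * comul (R := k) (↑x⁻¹ : A)) := by
          rw [← h2, mul_assoc]
      _ = ((↑x⁻¹ : A) ⊗ₜ[k] (↑x⁻¹ : A)) * 1 := by rw [h1]
      _ = (↑x⁻¹ : A) ⊗ₜ[k] (↑x⁻¹ : A) := mul_one _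
  let H : Subgroup Aˣ :=
    { carrier := G
      one_mem' := honemem
      mul_mem' := fun {x y} hx hy => hmulmem x y hx hy
      inv_mem' := fun {x} hx => hinvmem x hx }
  have hHfin : Finite H := hfin.to_subtype
  have hHcard : Nat.card H = N := by
    rw [← hcard, ← Nat.card_coe_set_eq]
    rfl
  have hpowN : ∀ x : Aˣ, x ∈ G → x ^ N = 1 := by
    intro x hx
    have hxH : x ∈ H := hx
    have := pow_card_eq_one' (G := H) (x := ⟨x, hxH⟩)
    rw [hHcard] at this
    have := congrArg (Subgroup.subtype H) this
    simpa using this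
  -- c is group-like
  have hcG : c ∈ G := by
    rw [hG]
    simpa [Set.mem_setOf_eq, hcval] using hgl
  -- conjugation by c is T^4
  have hc4 : ∀ a : A, T^[2] (T^[2] a) = (c : A) * a * ↑c⁻¹ := by
    intro a
    have hT2 : ∀ b : A, T^[2] b = antipode (R := k) (antipode (R := k) b) := by
      intro b; simp [Function.iterate_succ_apply', hT]
    rw [hT2, hT2, hu' a, hu (p * a * q), hcval, hcinv]
    simp [mul_assoc]
  constructor
  · -- forward direction
    intro hid
    obtain ⟨m', hm'⟩ := hodd
    set m : ℕ := m' + 1 with hm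
    have hNm : N + 1 = 2 * m := by omega
    refine ⟨c ^ m, ?_, ?_, ?_⟩
    · have : c ^ m ∈ G := by
        have hcH : c ∈ H := hcG
        exact (pow_mem hcH m : c ^ m ∈ H)
      rw [hG] at this
      exact this
    · have hcN : c ^ N = 1 := hpowN c hcG
      have h1 : (↑(c ^ m) : A) * (↑(c ^ m) : A) = (c : A) := by
        rw [← Units.val_mul, ← pow_add]
        have : m + m = N + 1 := by omega
        rw [this, pow_succ, hcN, one_mul]
      rw [h1, hcval, hup]
    · intro a
      have h1 := conj_iterate_aux (T^[2]) c hc4 m a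
      rw [← Function.iterate_mul] at h1
      have h2 : 2 * (2 * m) = 2 + 2 * N := by omega
      rw [h2, Function.iterate_add_apply] at h1
      rw [hid a] at h1
      have hT2 : T^[2] a = antipode (R := k) (antipode (R := k) a) := by
        simp [Function.iterate_succ_apply', hT]
      rw [hT2] at h1
      exact h1
  · -- backward direction
    rintro ⟨g, hg1, hg2, hg3⟩
    intro a
    have hgG : g ∈ G := by rw [hG]; exact hg1
    have hgN : g ^ N = 1 := hpowN g hgG
    have hconj : ∀ b : A, T (T b) = (g : A) * b * ↑g⁻¹ := fun b => hg3 b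
    have h1 := conj_iterate_aux T g hconj N a
    rw [hgN] at h1
    simpa using h1
end

section
/- Let A be a Hopf algebra over a commutative ring k with antipode S. Let ψ : A → k be a k-linear functional, let g and δ be units of A with g·g = δ⁻¹ and S(g) = g⁻¹, and assume that for every c ∈ A one has: ψ(c·S(a)) = ψ(c·a) for all a ∈ A if and only if S(c) = c·δ. Then for every central element z of A: ψ(g·z·S(a)) = ψ(g·z·a) for all a ∈ A if and only if S(z) = z. -/
open HopfAlgebra

theorem mul_eq_inv_of_mul_self_eq_inv {G : Type*} [Group G] {g δ : G} (h : g * g = δ⁻¹) :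
    g * δ = g⁻¹ :=
  eq_inv_of_mul_eq_one_right (by rw [← mul_assoc, h, inv_mul_cancel])

/-- If `g`, `δ` are units with `g² = δ⁻¹` and `S(g) = g⁻¹`, and the functional
`ψ` satisfies `ψ(c·S(—)) = ψ(c·—)` iff `S(c) = c·δ`, then for a central `z`:
`ψ(g·z·S(—)) = ψ(g·z·—)` iff `S(z) = z`. -/
theorem S_invariant_iff_S_fixed {k A : Type*} [CommRing k] [Ring A] [HopfAlgebra k A]
    (ψ : A →ₗ[k] k) (g δ : Aˣ)
    (hg2 : (g : A) * (g : A) = (↑δ⁻¹ : A))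
    (hSg : antipode (R := k) (g : A) = (↑g⁻¹ : A))
    (hδ : ∀ c : A, (∀ a : A, ψ (c * antipode (R := k) a) = ψ (c * a)) ↔
      antipode (R := k) c = c * (δ : A)) :
    ∀ z : A, (∀ x : A, z * x = x * z) →
      ((∀ a : A, ψ ((g : A) * z * antipode (R := k) a) = ψ ((g : A) * z * a)) ↔
        antipode (R := k) z = z) := by
  intro z hz
  have hgδ : (g : A) * δ = ↑g⁻¹ := by
    rw [← Units.val_mul, mul_eq_inv_of_mul_self_eq_inv (Units.ext hg2)]
  have hgzδ : (g : A) * z * δ = z * ↑g⁻¹ := by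
    rw [← hz, mul_assoc, hgδ]
  rw [hδ, antipode_mul_antidistrib, hSg, hgzδ, Units.mul_left_inj]
end

section
/- Let A be a Hopf algebra over a commutative ring k with comultiplication Δ (an algebra homomorphism A → A⊗A), counit ε and antipode S, and let ψ : A → k be a right-invariant k-linear functional, i.e. (ψ⊗id)(Δ(a)) = ψ(a)·1 for all a ∈ A, where (ψ⊗id) : A⊗A → A is the induced linear map. Let u be a unit of A, v a central unit of A, F a unit of A⊗A, and set g = u·v⁻¹. Assume v·v = u·S(u), Δ(u) = F⁻¹·(u⊗u), Δ(S(u)) = (S(u)⊗S(u))·F⁻¹ and Δ(v) = F⁻¹·(v⊗v). Let z be a central element of A with S(z) = z and (1⊗z)·Δ(z) = z⊗z. Define X_z = S(u⁻¹)·(ψ⊗id)((g·z ⊗ 1)·Δ(S(u))) − ψ(z·v)·v⁻¹ and Y_z = u·(ψ⊗id)((g·z ⊗ 1)·Δ(u⁻¹)) − ψ(z·v⁻¹)·v. Then z·X_z = 0 and z·Y_z = 0. -/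
/-!
Since `v` is central and `v² = u S(u)`, the relations for `Δ(S(u))` and `Δ(u)` become
`Δ(S(u)) = (g⁻¹ ⊗ g⁻¹) Δ(v)` and `Δ(u⁻¹) = (g⁻¹ ⊗ g⁻¹) Δ(v⁻¹)`, so both arguments of `ψ ⊗ id` are of
the form `(z ⊗ g⁻¹) Δ(w)`, with `w = v` resp. `w = v⁻¹`. Multiplying by `z` gives
`(z ⊗ z g⁻¹) Δ(w) = (1 ⊗ g⁻¹ z) Δ(z w)` by `(1 ⊗ z) Δ(z) = z ⊗ z`, which right invariance of `ψ`
evaluates to `ψ(z w) g⁻¹ z`. Finally `S(u⁻¹) g⁻¹ = v⁻¹` and `u g⁻¹ = v`, matching the subtracted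
terms.
-/

open TensorProduct Coalgebra Bialgebra HopfAlgebra

/-- The linear map `ψ ⊗ id : A ⊗ A → A`, sending `a ⊗ b` to `ψ(a) • b`. -/
noncomputable def psiTensorId {k A : Type*} [CommRing k] [Ring A] [Algebra k A]
    (ψ : A →ₗ[k] k) : A ⊗[k] A →ₗ[k] A :=
  TensorProduct.lift ((LinearMap.lsmul k A).comp ψ)

section TensorProduct

variable {k A : Type*} [CommRing k] [Ring A] [Algebra k A]

@[simp]
lemma psiTensorId_tmul (ψ : A →ₗ[k] k) (a b : A) : psiTensorId ψ (a ⊗ₜ[k] b) = ψ a • b := rfl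

lemma psiTensorId_one_tmul_mul (ψ : A →ₗ[k] k) (c : A) (T : A ⊗[k] A) :
    psiTensorId ψ (((1 : A) ⊗ₜ[k] c) * T) = c * psiTensorId ψ T := by
  induction T using TensorProduct.induction_on with
  | zero => simp
  | tmul a b => simp [Algebra.TensorProduct.tmul_mul_tmul]
  | add x y hx hy => rw [mul_add, map_add, map_add, mul_add, hx, hy]

lemma commute_tmul_of_forall_commute {a b : A} (ha : ∀ x, Commute a x) (hb : ∀ x, Commute b x)
    (T : A ⊗[k] A) : Commute (a ⊗ₜ[k] b) T := by
  induction T using TensorProduct.induction_on with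
  | zero => exact Commute.zero_right _
  | tmul x y => exact (ha x).tmul (hb y)
  | add x y hx hy => exact hx.add_right hy

end TensorProduct

section Bialgebra

variable {k A : Type*} [CommRing k] [Ring A] [Bialgebra k A]

lemma comul_units_inv_of_comul_eq {u : Aˣ} {F : (A ⊗[k] A)ˣ}
    (hΔu : comul (R := k) (u : A) = (↑F⁻¹ : A ⊗[k] A) * ((u : A) ⊗ₜ[k] (u : A))) :
    comul (R := k) (↑u⁻¹ : A) = ((↑u⁻¹ : A) ⊗ₜ[k] (↑u⁻¹ : A)) * (F : A ⊗[k] A) := by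
  refine (left_inv_eq_right_inv (a := comul (R := k) (u : A)) ?_ ?_).symm
  · rw [mul_assoc, hΔu, ← mul_assoc (F : A ⊗[k] A), Units.mul_inv, one_mul,
      Algebra.TensorProduct.tmul_mul_tmul, Units.inv_mul, Algebra.TensorProduct.one_def]
  · rw [← comul_mul, Units.mul_inv, comul_one]

lemma units_inv_val_eq_tmul_mul_comul {v : Aˣ} {F : (A ⊗[k] A)ˣ} (hv : ∀ x, Commute (v : A) x)
    (hΔv : comul (R := k) (v : A) = (↑F⁻¹ : A ⊗[k] A) * ((v : A) ⊗ₜ[k] (v : A))) :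
    (↑F⁻¹ : A ⊗[k] A) = ((↑v⁻¹ : A) ⊗ₜ[k] (↑v⁻¹ : A)) * comul (R := k) (v : A) := by
  rw [(commute_tmul_of_forall_commute (fun x => (hv x).units_inv_left)
      (fun x => (hv x).units_inv_left) (comul (R := k) (v : A))).eq, hΔv, mul_assoc,
    Algebra.TensorProduct.tmul_mul_tmul, Units.mul_inv, ← Algebra.TensorProduct.one_def, mul_one]

lemma units_val_eq_tmul_mul_comul_inv {v : Aˣ} {F : (A ⊗[k] A)ˣ}
    (hΔv : comul (R := k) (v : A) = (↑F⁻¹ : A ⊗[k] A) * ((v : A) ⊗ₜ[k] (v : A))) :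
    (F : A ⊗[k] A) = ((v : A) ⊗ₜ[k] (v : A)) * comul (R := k) (↑v⁻¹ : A) := by
  rw [comul_units_inv_of_comul_eq hΔv, ← mul_assoc, Algebra.TensorProduct.tmul_mul_tmul,
    Units.mul_inv, ← Algebra.TensorProduct.one_def, one_mul]

lemma comul_eq_tmul_mul_comul_of_comul_eq {a : A} {v : Aˣ} {F : (A ⊗[k] A)ˣ}
    (hv : ∀ x, Commute (v : A) x)
    (hΔv : comul (R := k) (v : A) = (↑F⁻¹ : A ⊗[k] A) * ((v : A) ⊗ₜ[k] (v : A)))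
    (hΔa : comul (R := k) a = (a ⊗ₜ[k] a) * (↑F⁻¹ : A ⊗[k] A)) :
    comul (R := k) a = ((a * ↑v⁻¹) ⊗ₜ[k] (a * ↑v⁻¹)) * comul (R := k) (v : A) := by
  rw [hΔa, units_inv_val_eq_tmul_mul_comul hv hΔv, ← mul_assoc,
    Algebra.TensorProduct.tmul_mul_tmul]

lemma comul_units_inv_eq_tmul_mul_comul_inv {u v : Aˣ} {F : (A ⊗[k] A)ˣ}
    (hΔu : comul (R := k) (u : A) = (↑F⁻¹ : A ⊗[k] A) * ((u : A) ⊗ₜ[k] (u : A)))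
    (hΔv : comul (R := k) (v : A) = (↑F⁻¹ : A ⊗[k] A) * ((v : A) ⊗ₜ[k] (v : A))) :
    comul (R := k) (↑u⁻¹ : A) =
      ((↑u⁻¹ * ↑v : A) ⊗ₜ[k] (↑u⁻¹ * ↑v : A)) * comul (R := k) (↑v⁻¹ : A) := by
  rw [comul_units_inv_of_comul_eq hΔu, units_val_eq_tmul_mul_comul_inv hΔv, ← mul_assoc,
    Algebra.TensorProduct.tmul_mul_tmul]

lemma mul_psiTensorId_tmul_mul_comul (ψ : A →ₗ[k] k)
    (hinv : ∀ a : A, psiTensorId ψ (comul (R := k) a) = ψ a • (1 : A))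
    {z c : A} (hzc : Commute z c) (hΔz : ((1 : A) ⊗ₜ[k] z) * comul (R := k) z = z ⊗ₜ[k] z)
    (w : A) :
    z * psiTensorId ψ ((z ⊗ₜ[k] c) * comul (R := k) w) = ψ (z * w) • (c * z) := by
  calc z * psiTensorId ψ ((z ⊗ₜ[k] c) * comul (R := k) w)
      = psiTensorId ψ (((1 : A) ⊗ₜ[k] z) * (z ⊗ₜ[k] c) * comul (R := k) w) := by
        rw [mul_assoc, psiTensorId_one_tmul_mul]
    _ = psiTensorId ψ (((1 : A) ⊗ₜ[k] c) * ((z ⊗ₜ[k] z) * comul (R := k) w)) := by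
        rw [← mul_assoc, Algebra.TensorProduct.tmul_mul_tmul, Algebra.TensorProduct.tmul_mul_tmul,
          one_mul, hzc.eq]
    _ = psiTensorId ψ (((1 : A) ⊗ₜ[k] (c * z)) * comul (R := k) (z * w)) := by
        rw [← hΔz, comul_mul, ← mul_assoc, ← mul_assoc, Algebra.TensorProduct.tmul_mul_tmul,
          one_mul, mul_assoc]
    _ = ψ (z * w) • (c * z) := by
        rw [psiTensorId_one_tmul_mul, hinv, mul_smul_comm, mul_one]

end Bialgebra

theorem z_mul_X_z_eq_zero_general {k A : Type*} [CommRing k] [Ring A] [HopfAlgebra k A]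
    (ψ : A →ₗ[k] k)
    (hinv : ∀ a : A, psiTensorId ψ (comul (R := k) a) = ψ a • (1 : A))
    (u v : Aˣ) (F : (A ⊗[k] A)ˣ)
    (hvc : ∀ x : A, (v : A) * x = x * (v : A))
    (g : A) (hg : g = (u : A) * (↑v⁻¹ : A))
    (hv2 : (v : A) * (v : A) = (u : A) * antipode (R := k) (u : A))
    (hΔu : comul (R := k) (u : A) = (↑F⁻¹ : A ⊗[k] A) * ((u : A) ⊗ₜ[k] (u : A)))
    (hΔSu : comul (R := k) (antipode (R := k) (u : A)) =
      ((antipode (R := k) (u : A)) ⊗ₜ[k] (antipode (R := k) (u : A))) * (↑F⁻¹ : A ⊗[k] A))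
    (hΔv : comul (R := k) (v : A) = (↑F⁻¹ : A ⊗[k] A) * ((v : A) ⊗ₜ[k] (v : A)))
    (z : A) (hzc : ∀ x : A, z * x = x * z)
    (hΔz : ((1 : A) ⊗ₜ[k] z) * comul (R := k) z = z ⊗ₜ[k] z)
    (X Y : A)
    (hX : X = antipode (R := k) (↑u⁻¹ : A) *
        psiTensorId ψ (((g * z) ⊗ₜ[k] (1 : A)) * comul (R := k) (antipode (R := k) (u : A)))
      - ψ (z * (v : A)) • (↑v⁻¹ : A))
    (hY : Y = (u : A) *
        psiTensorId ψ (((g * z) ⊗ₜ[k] (1 : A)) * comul (R := k) (↑u⁻¹ : A))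
      - ψ (z * (↑v⁻¹ : A)) • (v : A)) :
    z * X = 0 ∧ z * Y = 0 := by
  have hv : ∀ x, Commute (v : A) x := hvc
  have hz : ∀ x, Commute z x := hzc
  set g' : A := ↑u⁻¹ * ↑v with hg'
  have hgg' : g * g' = 1 := by
    rw [hg, hg', mul_assoc, ← mul_assoc (↑v⁻¹ : A), ((hv _).units_inv_left).eq, mul_assoc,
      Units.inv_mul, mul_one, Units.mul_inv]
  have hSu : antipode (R := k) (u : A) * ↑v⁻¹ = g' := by
    rw [hg', ← Units.inv_mul_cancel_left u (antipode (R := k) (u : A)), ← hv2, mul_assoc,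
      mul_assoc, Units.mul_inv, mul_one]
  have hSg' : antipode (R := k) (↑u⁻¹ : A) * g' = ↑v⁻¹ := by
    rw [← hSu, ← mul_assoc, ← antipode_mul_antidistrib, Units.mul_inv, antipode_one, one_mul]
  have hgz : ∀ T : A ⊗[k] A,
      ((g * z) ⊗ₜ[k] (1 : A)) * ((g' ⊗ₜ[k] g') * T) = (z ⊗ₜ[k] g') * T := fun T => by
    rw [← mul_assoc, Algebra.TensorProduct.tmul_mul_tmul, ← (hz g).eq, mul_assoc, hgg', mul_one,
      one_mul]
  constructor
  · rw [hX, comul_eq_tmul_mul_comul_of_comul_eq hv hΔv hΔSu, hSu, hgz, mul_sub, ← mul_assoc,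
      (hz _).eq, mul_assoc, mul_psiTensorId_tmul_mul_comul ψ hinv (hz g') hΔz, mul_smul_comm,
      ← mul_assoc, hSg', mul_smul_comm, ((hv z).units_inv_left).eq, sub_self]
  · rw [hY, comul_units_inv_eq_tmul_mul_comul_inv hΔu hΔv, hgz, mul_sub, ← mul_assoc, (hz _).eq,
      mul_assoc, mul_psiTensorId_tmul_mul_comul ψ hinv (hz g') hΔz, mul_smul_comm, ← mul_assoc,
      hg', Units.mul_inv_cancel_left, mul_smul_comm, (hv z).eq, sub_self]

/-- Equation (3.3) of Proposition 3.2 (unital case): with a right-invariant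
functional `ψ`, ribbon data `u, v, F`, `g = u·v⁻¹`, and a central element `z`
with `S(z) = z` and `(1⊗z)Δ(z) = z⊗z`, the elements
`X_z = S(u⁻¹)·(ψ⊗id)((gz⊗1)Δ(S(u))) − ψ(zv)·v⁻¹` and
`Y_z = u·(ψ⊗id)((gz⊗1)Δ(u⁻¹)) − ψ(zv⁻¹)·v` satisfy `z·X_z = z·Y_z = 0`. -/
theorem z_mul_X_z_eq_zero {k A : Type*} [CommRing k] [Ring A] [HopfAlgebra k A]
    (ψ : A →ₗ[k] k)
    (hinv : ∀ a : A, psiTensorId ψ (comul (R := k) a) = ψ a • (1 : A))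
    (u v : Aˣ) (F : (A ⊗[k] A)ˣ)
    (hvc : ∀ x : A, (v : A) * x = x * (v : A))
    (g : A) (hg : g = (u : A) * (↑v⁻¹ : A))
    (hv2 : (v : A) * (v : A) = (u : A) * antipode (R := k) (u : A))
    (hΔu : comul (R := k) (u : A) = (↑F⁻¹ : A ⊗[k] A) * ((u : A) ⊗ₜ[k] (u : A)))
    (hΔSu : comul (R := k) (antipode (R := k) (u : A)) =
      ((antipode (R := k) (u : A)) ⊗ₜ[k] (antipode (R := k) (u : A))) * (↑F⁻¹ : A ⊗[k] A))
    (hΔv : comul (R := k) (v : A) = (↑F⁻¹ : A ⊗[k] A) * ((v : A) ⊗ₜ[k] (v : A)))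
    (z : A) (hzc : ∀ x : A, z * x = x * z)
    (hSz : antipode (R := k) z = z)
    (hΔz : ((1 : A) ⊗ₜ[k] z) * comul (R := k) z = z ⊗ₜ[k] z)
    (X Y : A)
    (hX : X = antipode (R := k) (↑u⁻¹ : A) *
        psiTensorId ψ (((g * z) ⊗ₜ[k] (1 : A)) * comul (R := k) (antipode (R := k) (u : A)))
      - ψ (z * (v : A)) • (↑v⁻¹ : A))
    (hY : Y = (u : A) *
        psiTensorId ψ (((g * z) ⊗ₜ[k] (1 : A)) * comul (R := k) (↑u⁻¹ : A))
      - ψ (z * (↑v⁻¹ : A)) • (v : A)) :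
    z * X = 0 ∧ z * Y = 0 :=
  z_mul_X_z_eq_zero_general ψ hinv u v F hvc g hg hv2 hΔu hΔSu hΔv z hzc hΔz X Y hX hY
end
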